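/- arXiv:2408.10400 — 2 statements merged into one kernel-verified Lean document; each statement's English description precedes it below -/
import Mathlib

section
/- If a function f : [0,1] → ℝ is α-Hölder continuous for some α ∈ (0,1], then the Hausdorff dimension of its graph is at most 2 − α. -/
/-!
Cut `[0,1]` into `n` columns of width `h = 1/n`. Over the column starting at `a`, Hölder
continuity keeps the graph inside `[f a - C h^α, f a + C h^α]`, so it is covered by
`⌈2 C h^α / h⌉ + 1` squares of side `h`. The `n (⌈2 C h^{α-1}⌉ + 1) ≈ 2 C h^{α-2}` squares of
the whole cover have `∑ diam^{2-α} ≤ 2 C + 2` for every `n`, so `μH[2-α]` of the graph is finite.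
-/

open MeasureTheory Set Filter Topology Metric
open scoped NNReal ENNReal

theorem dimH_le_of_card_mul_rpow_le {X β : Type*} [EMetricSpace X] [MeasurableSpace X]
    [BorelSpace X] {ι : β → Type*} [∀ n, Fintype (ι n)] {l : Filter β} [l.NeBot]
    {s : Set X} {d : ℝ≥0} {K : ℝ≥0∞} (hK : K ≠ ∞) (r : β → ℝ≥0∞) (hr : Tendsto r l (𝓝 0))
    (t : ∀ n, ι n → Set X) (ht : ∀ᶠ n in l, ∀ i, ediam (t n i) ≤ r n)
    (hst : ∀ᶠ n in l, s ⊆ ⋃ i, t n i)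
    (hcard : ∀ᶠ n in l, Fintype.card (ι n) * r n ^ (d : ℝ) ≤ K) :
    dimH s ≤ d := by
  have hsum : ∀ᶠ n in l, ∑ i, ediam (t n i) ^ (d : ℝ) ≤ K := by
    filter_upwards [ht, hcard] with n hdiam hn
    calc ∑ i, ediam (t n i) ^ (d : ℝ) ≤ ∑ _i : ι n, r n ^ (d : ℝ) :=
          Finset.sum_le_sum fun i _ => ENNReal.rpow_le_rpow (hdiam i) d.2
      _ = Fintype.card (ι n) * r n ^ (d : ℝ) := by simp
      _ ≤ K := hn
  refine dimH_le_of_hausdorffMeasure_ne_top (ne_top_of_le_ne_top hK ?_)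
  exact (Measure.hausdorffMeasure_le_liminf_sum _ s r hr t ht hst).trans
    (liminf_le_of_frequently_le' hsum.frequently)

theorem ediam_Icc_prod_Icc_le (a b h : ℝ) :
    ediam (Icc a (a + h) ×ˢ Icc b (b + h)) ≤ ENNReal.ofReal h := by
  refine ediam_le fun p hp q hq => ?_
  rw [Prod.edist_eq]
  refine max_le ?_ ?_
  · simpa using edist_le_ediam_of_mem hp.1 hq.1
  · simpa using edist_le_ediam_of_mem hp.2 hq.2

theorem exists_lt_mem_Icc_mul {h v : ℝ} {M : ℕ} (hh : 0 < h) (hM : 0 < M) (hv : 0 ≤ v)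
    (hvM : v ≤ M * h) : ∃ j < M, v ∈ Icc (j * h) (j * h + h) := by
  have hfloor : (⌊v / h⌋₊ : ℝ) * h ≤ v :=
    (le_div_iff₀ hh).1 (Nat.floor_le (div_nonneg hv hh.le))
  rcases lt_or_ge ⌊v / h⌋₊ M with hlt | hge
  · refine ⟨⌊v / h⌋₊, hlt, hfloor, ?_⟩
    rw [← add_one_mul, ← div_le_iff₀ hh]
    exact (Nat.lt_floor_add_one _).le
  · refine ⟨M - 1, by omega, ?_, ?_⟩
    · refine le_trans ?_ hfloor
      gcongr
      exact_mod_cast (Nat.sub_le M 1).trans hge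
    · rwa [← add_one_mul, Nat.cast_sub hM, Nat.cast_one, sub_add_cancel]

section HolderGraph

variable (f : ℝ → ℝ) (C α : ℝ)

/-- The number of squares of side `h = 1/n` stacked over one column: `⌈2 C h^α / h⌉ + 1`. -/
noncomputable def holderColumnHeight (n : ℕ) : ℕ := ⌈2 * C * (n : ℝ)⁻¹ ^ α * n⌉₊ + 1

def holderSquares (n : ℕ) (ij : Fin n × Fin (holderColumnHeight C α n)) : Set (ℝ × ℝ) :=
  let h := (n : ℝ)⁻¹
  let a := ij.1 * h
  let b := f a - C * h ^ α + ij.2 * h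
  Icc a (a + h) ×ˢ Icc b (b + h)

theorem ediam_holderSquares_le (n : ℕ) (ij : Fin n × Fin (holderColumnHeight C α n)) :
    ediam (holderSquares f C α n ij) ≤ ENNReal.ofReal (n : ℝ)⁻¹ :=
  ediam_Icc_prod_Icc_le _ _ _

variable {f C α}

theorem graph_subset_iUnion_holderSquares (hC : 0 ≤ C) (hα : 0 ≤ α)
    (hf : ∀ x ∈ Icc (0 : ℝ) 1, ∀ y ∈ Icc (0 : ℝ) 1, |f x - f y| ≤ C * |x - y| ^ α)
    {n : ℕ} (hn : 0 < n) :
    {p : ℝ × ℝ | p.1 ∈ Icc (0 : ℝ) 1 ∧ p.2 = f p.1} ⊆ ⋃ ij, holderSquares f C α n ij := by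
  rintro ⟨x, y⟩ ⟨hx, hy : y = f x⟩
  set h : ℝ := (n : ℝ)⁻¹
  have hh : 0 < h := by positivity
  have hnh : (n : ℝ) * h = 1 := mul_inv_cancel₀ (by positivity)
  obtain ⟨i, hi, hxi⟩ := exists_lt_mem_Icc_mul hh hn hx.1 (hnh ▸ hx.2)
  set a : ℝ := i * h
  have hxa : |f x - f a| ≤ C * h ^ α := by
    refine (hf x hx a ⟨by positivity, hxi.1.trans hx.2⟩).trans ?_
    gcongr
    exact abs_sub_le_iff.2 ⟨by linarith [hxi.2], by linarith [hxi.1]⟩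
  have hheight : 2 * C * h ^ α ≤ holderColumnHeight C α n * h := by
    calc 2 * C * h ^ α = 2 * C * h ^ α * n * h := by rw [mul_assoc _ (n : ℝ), hnh, mul_one]
      _ ≤ holderColumnHeight C α n * h := by
        gcongr
        exact (Nat.le_ceil _).trans (by unfold holderColumnHeight; push_cast; linarith)
  obtain ⟨j, hj, hyj⟩ := exists_lt_mem_Icc_mul (v := f x - (f a - C * h ^ α))
    (M := holderColumnHeight C α n) hh (Nat.succ_pos _)
    (by linarith [(abs_le.1 hxa).1]) (by linarith [(abs_le.1 hxa).2])
  refine mem_iUnion.2 ⟨(⟨i, hi⟩, ⟨j, hj⟩), hxi, ?_, ?_⟩ <;> dsimp only <;> linarith [hyj.1, hyj.2]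

theorem card_holderSquares_mul_rpow_le (hC : 0 ≤ C) (hα : α ≤ 1) {n : ℕ} (hn : 0 < n) :
    (Fintype.card (Fin n × Fin (holderColumnHeight C α n)) : ℝ≥0∞) *
      ENNReal.ofReal (n : ℝ)⁻¹ ^ (2 - α) ≤ ENNReal.ofReal (2 * C + 2) := by
  set h : ℝ := (n : ℝ)⁻¹
  have hh : 0 < h := by positivity
  have hnh : (n : ℝ) * h = 1 := mul_inv_cancel₀ (by positivity)
  have hheight : (holderColumnHeight C α n : ℝ) ≤ 2 * C * h ^ α * n + 2 := by
    have := Nat.ceil_lt_add_one (by positivity : 0 ≤ 2 * C * h ^ α * n)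
    unfold holderColumnHeight
    push_cast
    linarith
  have hsplit : h ^ (2 - α) = h ^ (1 - α) * h := by
    rw [← Real.rpow_add_one hh.ne']
    congr 1
    ring
  have hpow : h ^ α * h ^ (1 - α) = h := by
    rw [← Real.rpow_add hh, add_sub_cancel, Real.rpow_one]
  have hreal : (n * holderColumnHeight C α n : ℝ) * h ^ (2 - α) ≤ 2 * C + 2 := calc
    _ ≤ n * (2 * C * h ^ α * n + 2) * h ^ (2 - α) := by gcongr
    _ = 2 * C * (h ^ α * h ^ (1 - α)) * (n * h) * n + 2 * h ^ (1 - α) * (n * h) := by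
      rw [hsplit]; ring
    _ = 2 * C + 2 * h ^ (1 - α) := by
      rw [hpow]; linear_combination (2 * C * (n * h + 1) + 2 * h ^ (1 - α)) * hnh
    _ ≤ 2 * C + 2 := by
      have : h ^ (1 - α) ≤ 1 :=
        Real.rpow_le_one hh.le (inv_le_one_of_one_le₀ (by exact_mod_cast hn)) (by linarith)
      linarith
  rw [Fintype.card_prod, Fintype.card_fin, Fintype.card_fin, ENNReal.ofReal_rpow_of_pos hh,
    ← ENNReal.ofReal_natCast, ← ENNReal.ofReal_mul (by positivity)]
  exact ENNReal.ofReal_le_ofReal (by exact_mod_cast hreal)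

end HolderGraph

/-- If `f : [0,1] → ℝ` is `α`-Hölder continuous with `α ∈ (0,1]`, then the
Hausdorff dimension of its graph is at most `2 - α`. -/
theorem dimH_graph_holder_le (f : ℝ → ℝ) (C α : ℝ) (hC : 0 < C)
    (hα0 : 0 < α) (hα1 : α ≤ 1)
    (hf : ∀ x ∈ Set.Icc (0 : ℝ) 1, ∀ y ∈ Set.Icc (0 : ℝ) 1,
      |f x - f y| ≤ C * |x - y| ^ α) :
    dimH {p : ℝ × ℝ | p.1 ∈ Set.Icc (0 : ℝ) 1 ∧ p.2 = f p.1}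
      ≤ ENNReal.ofReal (2 - α) := by
  have hd : ((2 - α).toNNReal : ℝ) = 2 - α := Real.coe_toNNReal _ (by linarith)
  have hr : Tendsto (fun n : ℕ => ENNReal.ofReal (n : ℝ)⁻¹) atTop (𝓝 0) := by
    simpa using ENNReal.tendsto_ofReal (tendsto_inv_atTop_nhds_zero_nat (𝕜 := ℝ))
  refine dimH_le_of_card_mul_rpow_le (d := (2 - α).toNNReal) (K := ENNReal.ofReal (2 * C + 2))
    ENNReal.ofReal_ne_top _ hr (holderSquares f C α)
    (.of_forall (ediam_holderSquares_le f C α)) ?_ ?_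
  · filter_upwards [eventually_gt_atTop 0] with n hn
    exact graph_subset_iUnion_holderSquares hC.le hα0.le hf hn
  · filter_upwards [eventually_gt_atTop 0] with n hn
    rw [hd]
    exact card_holderSquares_mul_rpow_le hC.le hα1 hn
end

section
/- The Weierstrass function W(x) = Σ_{n=0}^∞ a^n cos(b^n π x), with 0 < a < 1, b an odd integer, and ab > 1 + 3π/2, is nowhere differentiable on ℝ. -/
/-!
Fix `x` and `m`, write `bᵐ x = α + t` with `α ∈ ℤ` and `|t| ≤ 1/2`, and step to the point `x + h`
with `bᵐ (x + h) = α + 1`, so that `0 < h ≤ 3 / (2 bᵐ)`. Since `cos` is 1-Lipschitz, the terms of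
index `n < m` change by at most `π h (ab)ⁿ`, in total by at most `π h (ab)ᵐ / (ab - 1)`. Since `b`
is odd, the term of index `m + k` changes by `-(-1)^α aᵐ⁺ᵏ (1 + cos (bᵏ π t))`: all these changes
have the same sign, and the one with `k = 0` alone has size at least `aᵐ` because `|π t| ≤ π / 2`.
Hence the difference quotient is at least `(2/3 - π / (ab - 1)) (ab)ᵐ`, which tends to infinity
because `ab > 1 + 3π/2`.
-/

open Real Filter Topology Finset

noncomputable def weierstrass (a : ℝ) (b : ℕ) (x : ℝ) : ℝ :=
  ∑' n : ℕ, a ^ n * cos ((b : ℝ) ^ n * π * x)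

lemma not_differentiableAt_of_tendsto_abs_slope {f : ℝ → ℝ} {x : ℝ} {h : ℕ → ℝ}
    (hh : Tendsto h atTop (𝓝[≠] 0))
    (hslope : Tendsto (fun n => |(f (x + h n) - f x) / h n|) atTop atTop) :
    ¬ DifferentiableAt ℝ f x := by
  intro hf
  refine not_tendsto_atTop_of_tendsto_nhds (hf.hasDerivAt.tendsto_slope_zero.comp hh).abs ?_
  simpa only [Function.comp_def, smul_eq_mul, div_eq_inv_mul] using hslope

lemma cos_odd_mul_pi_mul_int_add {c : ℕ} (hc : Odd c) (j : ℤ) (s : ℝ) :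
    cos (c * π * (j + s)) = (-1) ^ j * cos (c * π * s) := by
  have : (c : ℝ) * π * (j + s) = c * π * s + ((c * j : ℤ) : ℝ) * π := by push_cast; ring
  rw [this, cos_add_int_mul_pi, zpow_mul, zpow_natCast, hc.neg_one_pow]

lemma cos_odd_mul_pi_mul_int_add_one_sub {c : ℕ} (hc : Odd c) (j : ℤ) (s : ℝ) :
    cos (c * π * (j + 1)) - cos (c * π * (j + s)) = -(-1) ^ j * (1 + cos (c * π * s)) := by
  rw [cos_odd_mul_pi_mul_int_add hc, cos_odd_mul_pi_mul_int_add hc, mul_one, cos_nat_mul_pi,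
    hc.neg_one_pow]
  ring

section

variable {a : ℝ}

lemma summable_weierstrass (ha : |a| < 1) (b : ℕ) (x : ℝ) :
    Summable fun n => a ^ n * cos ((b : ℝ) ^ n * π * x) := by
  refine (summable_geometric_of_lt_one (abs_nonneg a) ha).of_norm_bounded fun n => ?_
  simp only [norm_mul, norm_pow, Real.norm_eq_abs]
  exact mul_le_of_le_one_right (by positivity) (abs_cos_le_one _)

lemma weierstrass_sub_eq_sum_add_tsum (ha : |a| < 1) (b : ℕ) (x y : ℝ) (m : ℕ) :
    weierstrass a b y - weierstrass a b x =
      ∑ n ∈ range m, a ^ n * (cos ((b : ℝ) ^ n * π * y) - cos ((b : ℝ) ^ n * π * x)) +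
        ∑' k, a ^ (k + m) *
          (cos ((b : ℝ) ^ (k + m) * π * y) - cos ((b : ℝ) ^ (k + m) * π * x)) := by
  have hsum := (summable_weierstrass ha b y).sub (summable_weierstrass ha b x)
  simp only [← mul_sub] at hsum
  rw [hsum.sum_add_tsum_nat_add, weierstrass, weierstrass,
    ← (summable_weierstrass ha b y).tsum_sub (summable_weierstrass ha b x)]
  simp only [mul_sub]

lemma abs_sum_range_cos_sub_le {b : ℕ} (ha : 0 ≤ a) (hab : 1 < a * b) (x y : ℝ) (m : ℕ) :
    |∑ n ∈ range m, a ^ n * (cos ((b : ℝ) ^ n * π * y) - cos ((b : ℝ) ^ n * π * x))| ≤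
      π * |y - x| * (a * b) ^ m / (a * b - 1) := by
  have hterm : ∀ n, |a ^ n * (cos ((b : ℝ) ^ n * π * y) - cos ((b : ℝ) ^ n * π * x))| ≤
      (a * b) ^ n * (π * |y - x|) := fun n => by
    have hlip := abs_cos_sub_cos_le ((b : ℝ) ^ n * π * y) ((b : ℝ) ^ n * π * x)
    rw [← mul_sub, abs_mul, abs_of_nonneg (by positivity : (0 : ℝ) ≤ b ^ n * π)] at hlip
    rw [abs_mul, abs_of_nonneg (pow_nonneg ha n), mul_pow]
    calc a ^ n * |cos ((b : ℝ) ^ n * π * y) - cos ((b : ℝ) ^ n * π * x)|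
        ≤ a ^ n * ((b : ℝ) ^ n * π * |y - x|) := by gcongr
      _ = a ^ n * b ^ n * (π * |y - x|) := by ring
  have hgeom : ∑ n ∈ range m, (a * b) ^ n ≤ (a * b) ^ m / (a * b - 1) := by
    rw [geom_sum_eq hab.ne']
    exact div_le_div_of_nonneg_right (sub_le_self _ zero_le_one) (by linarith)
  calc _ ≤ ∑ n ∈ range m, |a ^ n * (cos ((b : ℝ) ^ n * π * y) - cos ((b : ℝ) ^ n * π * x))| :=
        abs_sum_le_sum_abs _ _
    _ ≤ ∑ n ∈ range m, (a * b) ^ n * (π * |y - x|) := sum_le_sum fun n _ => hterm n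
    _ = (∑ n ∈ range m, (a * b) ^ n) * (π * |y - x|) := (sum_mul ..).symm
    _ ≤ (a * b) ^ m / (a * b - 1) * (π * |y - x|) := by gcongr
    _ = π * |y - x| * (a * b) ^ m / (a * b - 1) := by ring

lemma le_abs_tsum_cos_sub_of_odd {b : ℕ} (ha0 : 0 ≤ a) (ha1 : a < 1) (hb : Odd b) {x y : ℝ} {m : ℕ}
    {α : ℤ} (hx : |(b : ℝ) ^ m * x - α| ≤ 1 / 2) (hy : (b : ℝ) ^ m * y = α + 1) :
    a ^ m ≤ |∑' k, a ^ (k + m) *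
      (cos ((b : ℝ) ^ (k + m) * π * y) - cos ((b : ℝ) ^ (k + m) * π * x))| := by
  set t := (b : ℝ) ^ m * x - α
  set g : ℕ → ℝ := fun k => a ^ k * (1 + cos ((b : ℝ) ^ k * π * t))
  have hg_nonneg : ∀ k, 0 ≤ g k := fun k =>
    mul_nonneg (pow_nonneg ha0 k) (by linarith [neg_one_le_cos ((b : ℝ) ^ k * π * t)])
  have hg : Summable g := by
    refine ((summable_geometric_of_lt_one ha0 ha1).mul_right 2).of_nonneg_of_le hg_nonneg
      fun k => mul_le_mul_of_nonneg_left ?_ (pow_nonneg ha0 k)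
    linarith [cos_le_one ((b : ℝ) ^ k * π * t)]
  have hterm : ∀ k, a ^ (k + m) *
      (cos ((b : ℝ) ^ (k + m) * π * y) - cos ((b : ℝ) ^ (k + m) * π * x)) =
        -(-1) ^ α * a ^ m * g k := fun k => by
    have hscale : ∀ z, (b : ℝ) ^ (k + m) * π * z = ((b ^ k : ℕ) : ℝ) * π * ((b : ℝ) ^ m * z) :=
      fun z => by push_cast; ring
    rw [hscale, hscale, hy, show (b : ℝ) ^ m * x = α + t by ring,
      cos_odd_mul_pi_mul_int_add_one_sub hb.pow]
    push_cast
    ring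
  have hg_zero : 1 ≤ g 0 := by
    obtain ⟨ht_ge, ht_le⟩ := abs_le.1 hx
    have : 0 ≤ cos (π * t) := cos_nonneg_of_mem_Icc ⟨by nlinarith [pi_pos], by nlinarith [pi_pos]⟩
    simp only [g, pow_zero, one_mul]
    linarith
  rw [tsum_congr hterm, hg.tsum_mul_left, abs_mul, abs_mul, abs_neg, abs_neg_one_zpow, one_mul,
    abs_of_nonneg (pow_nonneg ha0 m), abs_of_nonneg (tsum_nonneg hg_nonneg)]
  exact le_mul_of_one_le_right (pow_nonneg ha0 m)
    (hg_zero.trans (hg.le_tsum 0 fun k _ => hg_nonneg k))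

lemma le_abs_weierstrass_slope {b : ℕ} (ha0 : 0 ≤ a) (ha1 : a < 1) (hb : Odd b)
    (hab : 1 < a * b) {x h : ℝ} {m : ℕ} {α : ℤ} (hx : |(b : ℝ) ^ m * x - α| ≤ 1 / 2)
    (hxh : (b : ℝ) ^ m * (x + h) = α + 1) :
    (2 / 3 - π / (a * b - 1)) * (a * b) ^ m ≤
      |(weierstrass a b (x + h) - weierstrass a b x) / h| := by
  have hbm : (0 : ℝ) < b ^ m := pow_pos (Nat.cast_pos.2 (Nat.pos_of_ne_zero (by
    rintro rfl
    norm_num at hab))) m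
  obtain ⟨hx_ge, hx_le⟩ := abs_le.1 hx
  have hbh : (b : ℝ) ^ m * h = 1 - ((b : ℝ) ^ m * x - α) := by linarith [mul_add ((b : ℝ) ^ m) x h]
  have hh : 0 < h := pos_of_mul_pos_right (by linarith) hbm.le
  have hhead := abs_sum_range_cos_sub_le ha0 hab x (x + h) m
  rw [add_sub_cancel_left, abs_of_pos hh] at hhead
  have hlow : a ^ m - π * h * (a * b) ^ m / (a * b - 1) ≤
      |weierstrass a b (x + h) - weierstrass a b x| := by
    rw [weierstrass_sub_eq_sum_add_tsum (abs_lt.2 ⟨by linarith, ha1⟩) b x (x + h) m, add_comm]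
    linarith [abs_sub_abs_le_abs_add
      (∑' k, a ^ (k + m) * (cos ((b : ℝ) ^ (k + m) * π * (x + h)) -
        cos ((b : ℝ) ^ (k + m) * π * x)))
      (∑ n ∈ range m, a ^ n * (cos ((b : ℝ) ^ n * π * (x + h)) - cos ((b : ℝ) ^ n * π * x))),
      le_abs_tsum_cos_sub_of_odd ha0 ha1 hb hx hxh]
  have hmain : 2 / 3 * (a * b) ^ m * h ≤ a ^ m := by
    calc 2 / 3 * (a * b) ^ m * h = a ^ m * (2 / 3 * ((b : ℝ) ^ m * h)) := by ring
      _ ≤ a ^ m * 1 := by gcongr; linarith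
      _ = a ^ m := mul_one _
  rw [abs_div, abs_of_pos hh, le_div_iff₀ hh]
  calc (2 / 3 - π / (a * b - 1)) * (a * b) ^ m * h
      = 2 / 3 * (a * b) ^ m * h - π * h * (a * b) ^ m / (a * b - 1) := by ring
    _ ≤ _ := by linarith

end

lemma tendsto_round_mul_add_one_div_pow_sub {b : ℝ} (hb : 1 < b) (x : ℝ) :
    Tendsto (fun m : ℕ => (round (b ^ m * x) + 1) / b ^ m - x) atTop (𝓝[≠] 0) := by
  have hstep : ∀ m : ℕ, (round (b ^ m * x) + 1) / b ^ m - x =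
      (1 - (b ^ m * x - round (b ^ m * x))) / b ^ m := fun m => by
    field_simp [(pow_pos (zero_lt_one.trans hb) m).ne']
    ring
  have hpos : ∀ m : ℕ, 0 < (round (b ^ m * x) + 1) / b ^ m - x := fun m => by
    rw [hstep]
    exact div_pos (by linarith [(abs_le.1 (abs_sub_round (b ^ m * x))).2]) (by positivity)
  have hle : ∀ m : ℕ, (round (b ^ m * x) + 1) / b ^ m - x ≤ 3 / 2 * b⁻¹ ^ m := fun m => by
    rw [hstep, inv_pow, ← div_eq_mul_inv]
    exact div_le_div_of_nonneg_right (by linarith [(abs_le.1 (abs_sub_round (b ^ m * x))).1])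
      (by positivity)
  refine tendsto_nhdsWithin_iff.2 ⟨squeeze_zero (fun m => (hpos m).le) hle ?_,
    Eventually.of_forall fun m => (hpos m).ne'⟩
  simpa using (tendsto_pow_atTop_nhds_zero_of_lt_one (inv_nonneg.2 (zero_le_one.trans hb.le))
    (inv_lt_one_of_one_lt₀ hb)).const_mul (3 / 2)

theorem weierstrass_nowhere_differentiable_general (a : ℝ) (b : ℕ)
    (ha1 : a < 1) (hb : Odd b)
    (hab : 1 + 3 * π / 2 < a * b) :
    ∀ x : ℝ, ¬ DifferentiableAt ℝ
      (fun x : ℝ => ∑' n : ℕ, a ^ n * Real.cos ((b : ℝ) ^ n * π * x)) x := by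
  intro x
  have hab1 : 1 < a * b := by linarith [pi_pos]
  have ha0 : 0 < a := pos_of_mul_pos_left (zero_lt_one.trans hab1) (Nat.cast_nonneg b)
  have hb1 : (1 : ℝ) < b := by nlinarith
  have hC : 0 < 2 / 3 - π / (a * b - 1) := by
    rw [sub_pos, div_lt_iff₀ (by linarith)]
    linarith
  refine not_differentiableAt_of_tendsto_abs_slope (tendsto_round_mul_add_one_div_pow_sub hb1 x)
    (tendsto_atTop_mono (fun m => le_abs_weierstrass_slope ha0.le ha1 hb hab1
      (abs_sub_round _) ?_) ((tendsto_pow_atTop_atTop_of_one_lt hab1).const_mul_atTop hC))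
  field_simp [(pow_pos (zero_lt_one.trans hb1) m).ne']
  ring

/-- Weierstrass's theorem: `W(x) = Σ aⁿ cos(bⁿ π x)` with `0 < a < 1`, `b` an odd
positive integer, and `a*b > 1 + 3π/2`, is nowhere differentiable. -/
theorem weierstrass_nowhere_differentiable (a : ℝ) (b : ℕ)
    (ha0 : 0 < a) (ha1 : a < 1) (hb : Odd b) (hb1 : 1 < b)
    (hab : 1 + 3 * π / 2 < a * b) :
    ∀ x : ℝ, ¬ DifferentiableAt ℝ
      (fun x : ℝ => ∑' n : ℕ, a ^ n * Real.cos ((b : ℝ) ^ n * π * x)) x :=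
  weierstrass_nowhere_differentiable_general a b ha1 hb hab
end
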